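/- Pumping lemma for recognizable tree languages: let Σ be a ranked alphabet and x a symbol of rank 0 not in Σ. For every recognizable tree language L over Σ there is an integer p such that for every tree t ∈ L with height(t) ≥ p there exist trees u, v, w ∈ T_Σ({x}) such that (i) u and v each contain exactly one occurrence of x and w ∈ T_Σ; (ii) t = u ·_x v ·_x w; (iii) height(v ·_x w) ≤ p; (iv) height(v) ≥ 1; and (v) for every n ≥ 0, u ·_x v^{nx} ·_x w ∈ L, where v^{nx} denotes v ·_x v ·_x ⋯ ·_x v (n times, with v^{0x} = x). -/
import Mathlib


/-- Trees over a ranked alphabet `σ`. -/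
inductive RTree (σ : ℕ → Type) : Type
  | node {k : ℕ} (a : σ k) (ts : Fin k → RTree σ) : RTree σ

/-- The leaf tree for a rank-0 symbol. -/
def RTree.leaf {σ : ℕ → Type} (a : σ 0) : RTree σ := .node a Fin.elim0

/-- Deterministic bottom-up finite tree automaton (σ = ranked alphabet, Q = states). -/
structure DBUA (σ : ℕ → Type) (Q : Type) where
  δ : ∀ k, σ k → (Fin k → Q) → Q
  F : Set Q

/-- The state reached after bottom-up processing of a tree. -/
def DBUA.run {σ : ℕ → Type} {Q : Type} (M : DBUA σ Q) : RTree σ → Q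
  | .node a ts => M.δ _ a fun i => M.run (ts i)

/-- The tree language recognized by a deterministic bottom-up fta. -/
def DBUA.lang {σ : ℕ → Type} {Q : Type} (M : DBUA σ Q) : Set (RTree σ) :=
  {t | M.run t ∈ M.F}

/-- A tree language is recognizable if it is recognized by some deterministic
bottom-up finite tree automaton (with finitely many states). -/
def Recognizable {σ : ℕ → Type} (L : Set (RTree σ)) : Prop :=
  ∃ (Q : Type) (_ : Fintype Q) (M : DBUA σ Q), L = M.lang

/-- The ranked alphabet `σ` extended with one fresh symbol `x` of rank 0; trees
over it are the trees `T_σ({x})`. -/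
def extSig (σ : ℕ → Type) (V : Type) : ℕ → Type
  | 0 => σ 0 ⊕ V
  | k + 1 => σ (k + 1)

/-- The tree consisting of the single node `x`. -/
def xLeaf {σ : ℕ → Type} : RTree (extSig σ Unit) := .node (k := 0) (Sum.inr ()) Fin.elim0

/-- Embedding of `T_σ` into `T_σ({x})`. -/
def embedSym (σ : ℕ → Type) (V : Type) : ∀ k, σ k → extSig σ V k
  | 0, a => Sum.inl a
  | _ + 1, a => a

def embed {σ : ℕ → Type} {V : Type} : RTree σ → RTree (extSig σ V)
  | .node a ts => .node (embedSym σ V _ a) fun i => embed (ts i)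

/-- `subX t s = t ·_x s`: replace every occurrence of the leaf `x` in `t` by `s`. -/
def subX {σ : ℕ → Type} (t s : RTree (extSig σ Unit)) : RTree (extSig σ Unit) :=
  match t with
  | @RTree.node _ 0 b _ => Sum.elim (fun a => .node (k := 0) (Sum.inl a) Fin.elim0)
      (fun _ => s) b
  | @RTree.node _ (j + 1) b ts => .node (k := j + 1) (a := b) fun i => subX (ts i) s

/-- The number of occurrences of `x` in a tree of `T_σ({x})`. -/
def countX {σ : ℕ → Type} : RTree (extSig σ Unit) → ℕ
  | @RTree.node _ 0 b _ => Sum.elim (fun _ => 0) (fun _ => 1) b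
  | @RTree.node _ (_ + 1) _ ts => ∑ i, countX (ts i)

/-- The height of a tree: 0 for leaves, `1 + max` of the childrens' heights
otherwise. -/
def height {σ : ℕ → Type} : RTree σ → ℕ
  | .node _ ts => Finset.univ.sup fun i => height (ts i) + 1

/-- `vpow v n = v^{nx}`, the `n`-fold tree concatenation of `v` with itself at `x`
(`v^{0x} = x`). -/
def vpow {σ : ℕ → Type} (v : RTree (extSig σ Unit)) : ℕ → RTree (extSig σ Unit)
  | 0 => xLeaf
  | n + 1 => subX (vpow v n) v

namespace PumpAux
variable {σ : ℕ → Type} {Q : Type}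

lemma height_leaf (a : σ 0) (ts : Fin 0 → RTree σ) : height (RTree.node a ts) = 0 := by
  simp [height]

lemma exists_max {k : ℕ} (a : σ (k+1)) (ts : Fin (k+1) → RTree σ) :
    ∃ i, height (RTree.node a ts) = height (ts i) + 1 := by
  obtain ⟨i, -, hi⟩ := Finset.exists_mem_eq_sup (Finset.univ : Finset (Fin (k+1)))
    ⟨0, Finset.mem_univ 0⟩ (fun i => height (ts i) + 1)
  exact ⟨i, by simpa [height] using hi⟩

noncomputable def down : RTree σ → RTree σ
  | .node (k := 0) a ts => .node a ts
  | .node (k := _+1) a ts => ts (Classical.choose (exists_max a ts))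

lemma height_down {t : RTree σ} (h : 0 < height t) : height (down t) + 1 = height t := by
  cases t with
  | @node k a ts =>
    cases k with
    | zero => simp [height_leaf] at h
    | succ k =>
      have := Classical.choose_spec (exists_max a ts)
      simp only [down]
      omega

lemma height_chain : ∀ (n : ℕ) (t : RTree σ), n ≤ height t →
    height (down^[n] t) = height t - n := by
  intro n
  induction n with
  | zero => intro t _; simp
  | succ n ih =>
    intro t h
    have h0 : 0 < height t := by omega
    have hd := height_down h0
    rw [Function.iterate_succ_apply, ih (down t) (by omega)]
    omega

lemma countX_embed : ∀ t : RTree σ, countX (embed (V := Unit) t) = 0 := by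
  intro t
  induction t with
  | @node k a ts ih =>
    cases k with
    | zero => simp [embed, embedSym, countX]
    | succ k => simp [embed, embedSym, countX, ih]

lemma height_embed {V : Type} : ∀ t : RTree σ, height (embed (V := V) t) = height t := by
  intro t
  induction t with
  | @node k a ts ih => simp [embed, height, ih]

lemma subX_embed (s : RTree (extSig σ Unit)) : ∀ t : RTree σ, subX (embed t) s = embed t := by
  intro t
  induction t with
  | @node k a ts ih =>
    cases k with
    | zero =>
      simp only [embed, embedSym, subX, Sum.elim_inl]
      congr 1
      funext i; exact i.elim0
    | succ k =>
      simp only [embed, embedSym, subX]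
      congr 1
      funext i; exact ih i

lemma countX_subX (s : RTree (extSig σ Unit)) :
    ∀ t : RTree (extSig σ Unit), countX (subX t s) = countX t * countX s := by
  intro t
  induction t with
  | @node k b ts ih =>
    cases k with
    | zero =>
      cases b with
      | inl a => simp [subX, countX]
      | inr u => simp [subX, countX]
    | succ k =>
      simp only [subX, countX, ih]
      rw [Finset.sum_mul]

def Mx (M : DBUA σ Q) (q : Q) : DBUA (extSig σ Unit) Q where
  δ := fun k => match k with
    | 0 => fun b qs => Sum.elim (fun a => M.δ 0 a qs) (fun _ => q) b
    | k+1 => fun a qs => M.δ (k+1) a qs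
  F := M.F

lemma run_Mx_embed (M : DBUA σ Q) (q : Q) : ∀ t : RTree σ,
    (Mx M q).run (embed t) = M.run t := by
  intro t
  induction t with
  | @node k a ts ih =>
    cases k with
    | zero =>
      simp only [embed, embedSym, DBUA.run, Mx, Sum.elim_inl]
      congr 1
      funext i; exact i.elim0
    | succ k =>
      show M.δ (k+1) a (fun i => (Mx M q).run (embed (ts i)))
         = M.δ (k+1) a (fun i => M.run (ts i))
      congr 1; funext i; exact ih i

lemma run_Mx_subX (M : DBUA σ Q) (q : Q) (s : RTree (extSig σ Unit)) :
    ∀ t : RTree (extSig σ Unit),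
    (Mx M q).run (subX t s) = (Mx M ((Mx M q).run s)).run t := by
  intro t
  induction t with
  | @node k b ts ih =>
    cases k with
    | zero =>
      cases b with
      | inl a =>
        simp only [subX, Sum.elim_inl, DBUA.run, Mx]
        congr 1
        funext i; exact i.elim0
      | inr u =>
        simp only [subX, Sum.elim_inr]
        rfl
    | succ k =>
      show M.δ (k+1) b (fun i => (Mx M q).run (subX (ts i) s))
         = M.δ (k+1) b (fun i => (Mx M ((Mx M q).run s)).run (ts i))
      congr 1; funext i; exact ih i

lemma run_Mx_xLeaf (M : DBUA σ Q) (q : Q) : (Mx M q).run xLeaf = q := rfl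

lemma chain_context : ∀ (n : ℕ) (t : RTree σ), n ≤ height t →
    ∃ u : RTree (extSig σ Unit), countX u = 1 ∧
      embed t = subX u (embed (down^[n] t)) ∧ (1 ≤ n → 1 ≤ height u) := by
  intro n
  induction n with
  | zero =>
    intro t _
    exact ⟨xLeaf, rfl, rfl, fun h => absurd h (by omega)⟩
  | succ n ih =>
    intro t h
    cases t with
    | @node k a ts =>
      cases k with
      | zero => simp [height_leaf] at h
      | succ k =>
        set m := Classical.choose (exists_max a ts) with hm
        have hspec : height (RTree.node a ts) = height (ts m) + 1 :=
          Classical.choose_spec (exists_max a ts)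
        have hn : n ≤ height (ts m) := by omega
        obtain ⟨u', hcu', heu', -⟩ := ih (ts m) hn
        have hdown : down (RTree.node a ts) = ts m := rfl
        refine ⟨RTree.node (k := k+1) (a := a)
          (Function.update (fun i => embed (ts i)) m u'), ?_, ?_, ?_⟩
        · show (∑ i, countX (Function.update (fun i => embed (ts i)) m u' i)) = 1
          rw [Finset.sum_eq_single m]
          · rw [Function.update_self, hcu']
          · intro i _ hne
            rw [Function.update_of_ne hne]
            exact countX_embed (ts i)
          · intro hmem; exact absurd (Finset.mem_univ m) hmem
        · rw [Function.iterate_succ_apply, hdown]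
          show RTree.node (embedSym σ Unit _ a) (fun i => embed (ts i)) = _
          simp only [subX]
          congr 1
          funext i
          rcases eq_or_ne i m with rfl | hne
          · rw [Function.update_self]; exact heu'.symm ▸ heu' ▸ heu'.symm
          · rw [Function.update_of_ne hne]; exact (subX_embed _ (ts i)).symm
        · intro _
          show 1 ≤ Finset.univ.sup fun i =>
            height (Function.update (fun i => embed (ts i)) m u' i) + 1
          refine le_trans ?_ (Finset.le_sup
            (f := fun i => height (Function.update (fun i => embed (ts i)) m u' i) + 1)
            (Finset.mem_univ m))
          exact Nat.succ_le_succ (Nat.zero_le _)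

lemma unembed : ∀ s : RTree (extSig σ Unit), countX s = 0 → ∃ t : RTree σ, embed t = s := by
  intro s
  induction s with
  | @node k b ts ih =>
    cases k with
    | zero =>
      cases b with
      | inl a =>
        intro _
        refine ⟨RTree.leaf a, ?_⟩
        show RTree.node (embedSym σ Unit _ a) _ = _
        simp only [embedSym]
        congr 1
        funext i; exact i.elim0
      | inr u => intro h; simp [countX] at h
    | succ k =>
      intro h
      simp only [countX, Finset.sum_eq_zero_iff, Finset.mem_univ, forall_true_left] at h
      choose g hg using fun i => ih i (h i)
      refine ⟨RTree.node (k := k+1) (a := b) g, ?_⟩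
      show RTree.node (embedSym σ Unit _ b) _ = _
      simp only [embedSym]
      congr 1
      funext i; exact hg i

end PumpAux

open PumpAux

/-- Theorem 3.71, the pumping lemma for recognizable tree languages. -/
theorem pumping_recognizable {σ : ℕ → Type} (L : Set (RTree σ)) (hL : Recognizable L) :
    ∃ p : ℕ, ∀ t ∈ L, p ≤ height t →
      ∃ (u v : RTree (extSig σ Unit)) (w : RTree σ),
        countX u = 1 ∧ countX v = 1 ∧
        embed t = subX u (subX v (embed w)) ∧
        height (subX v (embed w)) ≤ p ∧
        1 ≤ height v ∧
        ∀ n : ℕ, ∃ t' ∈ L, embed t' = subX u (subX (vpow v n) (embed w)) := by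
  obtain ⟨Q, fQ, M, rfl⟩ := hL
  refine ⟨Fintype.card Q, ?_⟩
  set p := Fintype.card Q with hpdef
  intro t ht hp
  set d := height t - p with hd
  set B := down^[d] t with hB
  have hdt : d ≤ height t := by omega
  have hhB : height B = p := by rw [hB, height_chain d t hdt]; omega
  have main : ∀ i j : ℕ, i < j → j ≤ p →
      M.run (down^[i] B) = M.run (down^[j] B) →
      ∃ (u v : RTree (extSig σ Unit)) (w : RTree σ),
        countX u = 1 ∧ countX v = 1 ∧
        embed t = subX u (subX v (embed w)) ∧
        height (subX v (embed w)) ≤ p ∧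
        1 ≤ height v ∧
        ∀ n : ℕ, ∃ t' ∈ M.lang, embed t' = subX u (subX (vpow v n) (embed w)) := by
    intro i j hij hjp hrun
    set C := down^[i] B with hC
    set w := down^[j] B with hw
    have hiC : i + d ≤ height t := by omega
    have hhC : height C = p - i := by rw [hC, height_chain i B (by omega)]; omega
    have hCid : down^[i + d] t = C := by rw [Function.iterate_add_apply]
    have hji : j - i ≤ height C := by omega
    have hwC : down^[j - i] C = w := by
      rw [hC, ← Function.iterate_add_apply]
      congr 1
      omega
    obtain ⟨u, hcu, heu, -⟩ := chain_context (i + d) t hiC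
    rw [hCid] at heu
    obtain ⟨v, hcv, hev, hhv⟩ := chain_context (j - i) C hji
    rw [hwC] at hev
    set q := M.run C with hq
    have hqw : M.run w = q := hrun.symm
    set R := Mx M q with hR
    have hRw : R.run (embed w) = q := by rw [hR, run_Mx_embed, hqw]
    have hRvw : R.run (subX v (embed w)) = q := by
      rw [← hev, hR, run_Mx_embed, hq]
    have hRv : R.run v = q := by
      have e := run_Mx_subX M q (embed w) v
      rw [← hR, hRw, ← hR] at e
      rw [← e, hRvw]
    have hpow : ∀ n, R.run (vpow v n) = q := by
      intro n
      induction n with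
      | zero => exact run_Mx_xLeaf M q
      | succ n ihn =>
        show R.run (subX (vpow v n) v) = q
        have e := run_Mx_subX M q v (vpow v n)
        rw [← hR, hRv, ← hR] at e
        rw [e, ihn]
    have hS : ∀ n, R.run (subX (vpow v n) (embed w)) = q := by
      intro n
      have e := run_Mx_subX M q (embed w) (vpow v n)
      rw [← hR, hRw, ← hR] at e
      rw [e, hpow]
    refine ⟨u, v, w, hcu, hcv, ?_, ?_, hhv (by omega), ?_⟩
    · rw [heu, hev]
    · rw [← hev, height_embed, hhC]; omega
    · intro n
      have h0 : countX (subX u (subX (vpow v n) (embed w))) = 0 := by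
        rw [countX_subX, countX_subX, countX_embed]
        omega
      obtain ⟨t', ht'⟩ := unembed _ h0
      refine ⟨t', ?_, ht'⟩
      have e1 : M.run t' = R.run u := by
        rw [← run_Mx_embed M q t', ← hR, ht']
        have e := run_Mx_subX M q (subX (vpow v n) (embed w)) u
        rw [← hR, hS n, ← hR] at e
        exact e
      have e2 : M.run t = R.run u := by
        rw [← run_Mx_embed M q t, ← hR, heu, hev]
        have e := run_Mx_subX M q (subX v (embed w)) u
        rw [← hR, hRvw, ← hR] at e
        exact e
      show M.run t' ∈ M.F
      rw [e1, ← e2]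
      exact ht
  have card_lt : Fintype.card Q < Fintype.card (Fin (p + 1)) := by simp [hpdef]
  obtain ⟨i, j, hne, hfeq⟩ := Fintype.exists_ne_map_eq_of_card_lt
    (fun n : Fin (p + 1) => M.run (down^[(n : ℕ)] B)) card_lt
  rcases Ne.lt_or_gt hne with hlt | hlt
  · exact main i j (by exact_mod_cast hlt) (by omega) hfeq
  · exact main j i (by exact_mod_cast hlt) (by omega) hfeq.symm
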